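/- arXiv:2012.03246 — 4 statements merged into one kernel-verified Lean document; each statement's English description precedes it below -/
import Mathlib

section
/- Let Γ be a connected graph with β-stable intervals (β ≥ 1), and let k ≥ 0. If P is a path in Γ of length d_Γ(P_-,P_+) + k and v is a vertex on P, then there exists a geodesic Q in Γ with the same endpoints as P and a vertex w on Q such that d_Γ(v,w) ≤ βk. -/
/-!
Induct on the walk `P = a → a' → …`. The excess `|P| - d(a, b)` never increases when the first
edge is dropped. If that edge moves towards `b`, a geodesic from `a'` extends to one from `a`
through the same nearby vertex. Otherwise the excess drops by at least one, and stable intervals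
move a geodesic from `a'` to one from `a` at the cost of `β`.
-/

open SimpleGraph

/-- The Vietoris–Rips graph of `G` at scale `N`: same vertices, with distinct
vertices adjacent iff their `G`-distance is at most `N`. -/
def rips {V : Type*} (G : SimpleGraph V) (N : ℕ) : SimpleGraph V where
  Adj u v := u ≠ v ∧ G.dist u v ≤ N
  symm := ⟨fun u v h => ⟨h.1.symm, by rw [SimpleGraph.dist_comm]; exact h.2⟩⟩
  loopless := ⟨fun v h => h.1 rfl⟩

/-- The ball of radius `ρ` around `x` in the graph `G` (combinatorial metric). -/
def gball {V : Type*} (G : SimpleGraph V) (x : V) (ρ : ℕ) : Set V :=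
  {u : V | G.dist u x ≤ ρ}

/-- A graph has `β`-stable intervals if for every geodesic `P`, every vertex `w` on `P`,
and every vertex `u` at distance `1` from `P`'s start, there is a geodesic from `u` to
`P`'s end containing a vertex within distance `β` of `w`. -/
def HasStableIntervals {V : Type*} (G : SimpleGraph V) (β : ℕ) : Prop :=
  ∀ ⦃a b : V⦄ (P : G.Walk a b), P.length = G.dist a b →
    ∀ w ∈ P.support, ∀ u : V, G.dist u a = 1 →
      ∃ Q : G.Walk u b, Q.length = G.dist u b ∧ ∃ v ∈ Q.support, G.dist w v ≤ β

namespace SimpleGraph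

variable {V : Type*} {G : SimpleGraph V}

lemma Adj.dist_eq_add_one_of_dist_lt {a a' b : V} (h : G.Adj a a')
    (hd : G.dist a' b < G.dist a b) : G.dist a b = G.dist a' b + 1 := by
  have := h.diff_dist_adj (u := b)
  rw [dist_comm (u := b), dist_comm (u := b)] at this
  omega

end SimpleGraph

theorem HasStableIntervals.exists_geodesic_near {V : Type*} {G : SimpleGraph V} {β : ℕ}
    (hG : HasStableIntervals G β) {a b : V} (p : G.Walk a b) {v : V} (hv : v ∈ p.support) :
    ∃ q : G.Walk a b, q.length = G.dist a b ∧
      ∃ w ∈ q.support, G.dist v w ≤ β * (p.length - G.dist a b) := by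
  induction p with
  | nil =>
    rw [Walk.support_nil, List.mem_singleton] at hv
    subst hv
    exact ⟨.nil, by simp, v, by simp, by simp⟩
  | @cons a a' b h p ih =>
    rw [Walk.support_cons, List.mem_cons] at hv
    rcases hv with rfl | hv
    · obtain ⟨q, hq⟩ := Reachable.exists_walk_length_eq_dist ⟨p.cons h⟩
      exact ⟨q, hq, v, q.start_mem_support, by simp⟩
    obtain ⟨q', hq', w', hw', hvw'⟩ := ih hv
    have hp : G.dist a' b ≤ p.length := dist_le p
    rw [Walk.length_cons]
    rcases lt_or_ge (G.dist a' b) (G.dist a b) with hcloser | hfarther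
    · have hd := h.dist_eq_add_one_of_dist_lt hcloser
      refine ⟨q'.cons h, by rw [Walk.length_cons, hq', hd], w', by simp [hw'], ?_⟩
      exact hvw'.trans (Nat.mul_le_mul_left β (by omega))
    · obtain ⟨q, hq, w, hw, hw'w⟩ := hG q' hq' w' hw' a (dist_eq_one_iff_adj.mpr h)
      have hreach : G.Reachable v w' := by
        classical exact ⟨(p.dropUntil v hv).append (q'.dropUntil w' hw').reverse⟩
      refine ⟨q, hq, w, hw, ?_⟩
      calc G.dist v w ≤ G.dist v w' + G.dist w' w := hreach.dist_triangle_left w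
        _ ≤ β * (p.length - G.dist a' b) + β := add_le_add hvw' hw'w
        _ = β * (p.length - G.dist a' b + 1) := by ring
        _ ≤ β * (p.length + 1 - G.dist a b) := Nat.mul_le_mul_left β (by omega)

theorem stmt4_general {V : Type*} (Γ : SimpleGraph V)
    (β : ℕ) (hstable : HasStableIntervals Γ β)
    (k : ℕ) {a b : V} (P : Γ.Walk a b) (hP : P.length = Γ.dist a b + k)
    (v : V) (hv : v ∈ P.support) :
    ∃ Q : Γ.Walk a b, Q.length = Γ.dist a b ∧ ∃ w ∈ Q.support, Γ.dist v w ≤ β * k := by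
  simpa [hP] using hstable.exists_geodesic_near P hv

theorem stmt4 {V : Type*} (Γ : SimpleGraph V) (hconn : Γ.Connected)
    (β : ℕ) (hβ : 1 ≤ β) (hstable : HasStableIntervals Γ β)
    (k : ℕ) {a b : V} (P : Γ.Walk a b) (hP : P.length = Γ.dist a b + k)
    (v : V) (hv : v ∈ P.support) :
    ∃ Q : Γ.Walk a b, Q.length = Γ.dist a b ∧ ∃ w ∈ Q.support, Γ.dist v w ≤ β * k :=
  stmt4_general Γ β hstable k P hP v hv
end

section
/- Let Γ be a connected graph with β-stable intervals (β ≥ 1) and let N ≥ 1. Then the Vietoris–Rips graph Γ_N has (3β+1)-stable intervals. -/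
open SimpleGraph

/-! In `Γ`, a vertex `w` of a `Γ_N`-geodesic from `a` to `b` has `Γ`-defect
`d(a,w) + d(w,b) - d(a,b)` less than `N`. Moving the endpoints of geodesics one step at a time,
stability of `Γ` puts every vertex of defect `δ` within `β δ` of a `Γ`-geodesic, and moving the
start point of a `Γ`-geodesic by `N` moves its vertices by at most `β N`. Stopping the new
`Γ`-geodesic from `u` to `b` at the last multiple of `N` before the vertex found gives a vertex
on a `Γ_N`-geodesic from `u` to `b`, at `Γ`-distance at most `(2β + 1) N` from `w`. -/

namespace SimpleGraph

def geodesicInterval {V : Type*} (G : SimpleGraph V) (x y : V) : Set V :=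
  {w | G.dist x w + G.dist w y = G.dist x y}

variable {V : Type*} {G : SimpleGraph V} {a b w x y : V}

theorem mem_geodesicInterval :
    w ∈ G.geodesicInterval x y ↔ G.dist x w + G.dist w y = G.dist x y := Iff.rfl

theorem mem_geodesicInterval_comm :
    w ∈ G.geodesicInterval x y ↔ w ∈ G.geodesicInterval y x := by
  have h₁ : G.dist x w = G.dist w x := dist_comm
  have h₂ : G.dist w y = G.dist y w := dist_comm
  have h₃ : G.dist x y = G.dist y x := dist_comm
  rw [mem_geodesicInterval, mem_geodesicInterval]
  omega

theorem Walk.mem_geodesicInterval_of_mem_support (P : G.Walk x y)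
    (hP : P.length = G.dist x y) (hw : w ∈ P.support) : w ∈ G.geodesicInterval x y := by
  classical
  have hlen : (P.takeUntil w hw).length + (P.dropUntil w hw).length = P.length := by
    rw [← Walk.length_append, P.take_spec hw]
  have htri := (P.takeUntil w hw).reachable.dist_triangle_left y
  have h₁ := dist_le (P.takeUntil w hw)
  have h₂ := dist_le (P.dropUntil w hw)
  rw [mem_geodesicInterval]
  omega

namespace Connected

variable (hG : G.Connected)
include hG

theorem mem_geodesicInterval_of_dist_add_dist_le (h : G.dist x w + G.dist w y ≤ G.dist x y) :
    w ∈ G.geodesicInterval x y :=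
  le_antisymm h hG.dist_triangle

theorem exists_walk_of_mem_geodesicInterval (hw : w ∈ G.geodesicInterval x y) :
    ∃ P : G.Walk x y, P.length = G.dist x y ∧ w ∈ P.support := by
  obtain ⟨P₁, hP₁⟩ := hG.exists_walk_length_eq_dist x w
  obtain ⟨P₂, hP₂⟩ := hG.exists_walk_length_eq_dist w y
  refine ⟨P₁.append P₂, ?_,
    Walk.support_subset_support_append_left _ _ P₁.end_mem_support⟩
  rw [Walk.length_append, hP₁, hP₂]
  exact hw

theorem exists_dist_eq_of_le_dist {k : ℕ} (hk : k ≤ G.dist x y) :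
    ∃ v, G.dist x v = k ∧ G.dist v y = G.dist x y - k := by
  obtain ⟨P, hP⟩ := hG.exists_walk_length_eq_dist x y
  have h₁ := dist_le (P.take k)
  have h₂ := dist_le (P.drop k)
  have htri : G.dist x y ≤ G.dist x (P.getVert k) + G.dist (P.getVert k) y := hG.dist_triangle
  simp only [Walk.take_length, Walk.drop_length] at h₁ h₂
  exact ⟨P.getVert k, by omega, by omega⟩

theorem hasStableIntervals_iff {β : ℕ} :
    HasStableIntervals G β ↔
      ∀ ⦃a b w u : V⦄, w ∈ G.geodesicInterval a b → G.dist u a = 1 →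
        ∃ v ∈ G.geodesicInterval u b, G.dist w v ≤ β := by
  constructor
  · intro h a b w u hw hu
    obtain ⟨P, hP, hwP⟩ := hG.exists_walk_of_mem_geodesicInterval hw
    obtain ⟨Q, hQ, v, hvQ, hwv⟩ := h P hP w hwP u hu
    exact ⟨v, Q.mem_geodesicInterval_of_mem_support hQ hvQ, hwv⟩
  · intro h a b P hP w hwP u hu
    obtain ⟨v, hv, hwv⟩ := h (P.mem_geodesicInterval_of_mem_support hP hwP) hu
    obtain ⟨Q, hQ, hvQ⟩ := hG.exists_walk_of_mem_geodesicInterval hv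
    exact ⟨Q, hQ, v, hvQ, hwv⟩

/-- Walking from `w` towards `b` keeps `w` on a geodesic from `a` until the defect drops. -/
theorem exists_adj_dist_add_dist_lt (h : G.dist a b < G.dist a w + G.dist w b) :
    ∃ y z, w ∈ G.geodesicInterval a y ∧ G.Adj y z ∧
      G.dist a z + G.dist z b < G.dist a w + G.dist w b := by
  obtain ⟨n, hn⟩ : ∃ n, G.dist w b = n := ⟨_, rfl⟩
  induction n generalizing w with
  | zero =>
    obtain rfl := hG.dist_eq_zero_iff.mp hn
    simp at h
  | succ n ih =>
    obtain ⟨s, hws, hsb⟩ := hG.exists_dist_eq_of_le_dist (x := w) (y := b) (k := 1) (by omega)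
    have hadj : G.Adj w s := dist_eq_one_iff_adj.mp hws
    by_cases hs : G.dist a s + G.dist s b < G.dist a w + G.dist w b
    · exact ⟨w, s, by simp [mem_geodesicInterval], hadj, hs⟩
    have has : G.dist a s ≤ G.dist a w + G.dist w s := hG.dist_triangle
    obtain ⟨y, z, hsy, hyz, hz⟩ := ih (w := s) (by omega) (by omega)
    refine ⟨y, z, ?_, hyz, by omega⟩
    have hay : G.dist a y ≤ G.dist a w + G.dist w y := hG.dist_triangle
    have hwy : G.dist w y ≤ G.dist w s + G.dist s y := hG.dist_triangle
    rw [mem_geodesicInterval] at hsy ⊢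
    omega

end Connected

end SimpleGraph

namespace HasStableIntervals

variable {V : Type*} {G : SimpleGraph V} {β : ℕ} (hstable : HasStableIntervals G β)
  (hG : G.Connected)
include hstable hG

theorem exists_dist_le_mul_dist_start {a b w : V} (hw : w ∈ G.geodesicInterval a b) (u : V) :
    ∃ v ∈ G.geodesicInterval u b, G.dist w v ≤ β * G.dist u a := by
  have hstable' := hG.hasStableIntervals_iff.mp hstable
  induction hn : G.dist u a generalizing u with
  | zero => exact ⟨w, hG.dist_eq_zero_iff.mp hn ▸ hw, by simp⟩
  | succ n ih =>
    obtain ⟨u', huu', hu'a⟩ :=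
      hG.exists_dist_eq_of_le_dist (x := u) (y := a) (k := 1) (by omega)
    obtain ⟨v', hv', hwv'⟩ := ih u' (by omega)
    obtain ⟨v, hv, hv'v⟩ := hstable' hv' huu'
    have htri : G.dist w v ≤ G.dist w v' + G.dist v' v := hG.dist_triangle
    exact ⟨v, hv, by rw [Nat.mul_succ]; omega⟩

theorem exists_dist_le_mul_of_dist_add_dist_le {a b w : V} {δ : ℕ}
    (h : G.dist a w + G.dist w b ≤ G.dist a b + δ) :
    ∃ v ∈ G.geodesicInterval a b, G.dist w v ≤ β * δ := by
  have hstable' := hG.hasStableIntervals_iff.mp hstable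
  induction δ generalizing w with
  | zero => exact ⟨w, hG.mem_geodesicInterval_of_dist_add_dist_le h, by simp⟩
  | succ δ ih =>
    by_cases hw : G.dist a w + G.dist w b ≤ G.dist a b
    · exact ⟨w, hG.mem_geodesicInterval_of_dist_add_dist_le hw, by simp⟩
    obtain ⟨y, z, hwy, hyz, hz⟩ := hG.exists_adj_dist_add_dist_lt (not_le.mp hw)
    -- Stability at `y` gives a geodesic from `z` to `a` passing within `β` of `w`; each of its
    -- vertices has defect at most that of `z`.
    obtain ⟨v₀, hv₀, hwv₀⟩ :=
      hstable' (mem_geodesicInterval_comm.mp hwy) (dist_eq_one_iff_adj.mpr hyz.symm)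
    have hv₀b : G.dist v₀ b ≤ G.dist v₀ z + G.dist z b := hG.dist_triangle
    rw [mem_geodesicInterval_comm, mem_geodesicInterval] at hv₀
    obtain ⟨v, hv, hv₀v⟩ := ih (w := v₀) (by omega)
    have htri : G.dist w v ≤ G.dist w v₀ + G.dist v₀ v := hG.dist_triangle
    exact ⟨v, hv, by rw [Nat.mul_succ]; omega⟩

end HasStableIntervals

namespace SimpleGraph

variable {V : Type*} {Γ : SimpleGraph V} {N : ℕ} {x y : V}

theorem rips_dist_le_one (h : Γ.dist x y ≤ N) : (rips Γ N).dist x y ≤ 1 := by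
  by_cases hxy : x = y
  · simp [hxy]
  · exact (dist_eq_one_iff_adj.mpr (show (rips Γ N).Adj x y from ⟨hxy, h⟩)).le

theorem le_rips (hN : 1 ≤ N) : Γ ≤ rips Γ N := by
  intro u v h
  exact ⟨h.ne, (dist_eq_one_iff_adj.mpr h).le.trans hN⟩

theorem connected_rips (hconn : Γ.Connected) (hN : 1 ≤ N) : (rips Γ N).Connected :=
  hconn.mono (le_rips hN)

namespace Connected

variable (hconn : Γ.Connected)
include hconn

theorem dist_le_length_mul_of_rips_walk (W : (rips Γ N).Walk x y) :
    Γ.dist x y ≤ W.length * N := by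
  induction W with
  | nil => simp
  | @cons x x' y h W ih =>
    calc Γ.dist x y ≤ Γ.dist x x' + Γ.dist x' y := hconn.dist_triangle
      _ ≤ N + W.length * N := Nat.add_le_add h.2 ih
      _ = (Walk.cons h W).length * N := by rw [Walk.length_cons, Nat.succ_mul, Nat.add_comm]

/-- The metric of `Γ_N` is `⌈d_Γ / N⌉`, in the form of a Galois connection. -/
theorem rips_dist_le_iff (hN : 1 ≤ N) {j : ℕ} :
    (rips Γ N).dist x y ≤ j ↔ Γ.dist x y ≤ j * N := by
  constructor
  · intro h
    obtain ⟨W, hW⟩ := (connected_rips hconn hN).exists_walk_length_eq_dist x y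
    exact (hconn.dist_le_length_mul_of_rips_walk W).trans (hW ▸ Nat.mul_le_mul_right N h)
  · induction j generalizing x with
    | zero =>
      intro h
      simp [hconn.dist_eq_zero_iff.mp (by simpa using h)]
    | succ j ih =>
      intro h
      obtain ⟨z, hxz, hzy⟩ := hconn.exists_dist_eq_of_le_dist (x := x) (y := y)
        (min_le_right N (Γ.dist x y))
      have htri : (rips Γ N).dist x y ≤ (rips Γ N).dist x z + (rips Γ N).dist z y :=
        (connected_rips hconn hN).dist_triangle
      have hxz' := rips_dist_le_one (N := N) (by omega : Γ.dist x z ≤ N)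
      have hzy' := ih (x := z) (by rw [Nat.succ_mul] at h; omega)
      omega

theorem dist_add_dist_lt_of_mem_rips_geodesicInterval (hN : 1 ≤ N) {a b w : V}
    (hw : w ∈ (rips Γ N).geodesicInterval a b) :
    Γ.dist a w + Γ.dist w b < Γ.dist a b + N := by
  rw [mem_geodesicInterval] at hw
  set m := (rips Γ N).dist a b
  have haw := (hconn.rips_dist_le_iff hN).mp (le_refl ((rips Γ N).dist a w))
  have hwb := (hconn.rips_dist_le_iff hN).mp (le_refl ((rips Γ N).dist w b))
  have hsum : (rips Γ N).dist a w * N + (rips Γ N).dist w b * N = m * N := by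
    rw [← Nat.add_mul, hw]
  by_contra h
  have hm : m ≤ m - 1 := (hconn.rips_dist_le_iff hN).mpr (by rw [Nat.sub_one_mul]; omega)
  have hmN : m * N = 0 := by rw [show m = 0 by omega, Nat.zero_mul]
  omega

/-- Stopping at the last multiple of `N` before `v₁` on a `Γ`-geodesic from `u` to `b`. -/
theorem exists_mem_rips_geodesicInterval_dist_lt (hN : 1 ≤ N) {u b v₁ : V}
    (hv₁ : v₁ ∈ Γ.geodesicInterval u b) :
    ∃ v ∈ (rips Γ N).geodesicInterval u b, Γ.dist v₁ v < N := by
  rw [mem_geodesicInterval] at hv₁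
  set s := Γ.dist u v₁
  have hks : s / N * N ≤ s := Nat.div_mul_le_self s N
  have hmod : s - s / N * N < N := by
    have := Nat.mod_add_div' s N
    have := Nat.mod_lt s (show 0 < N by omega)
    omega
  set k := s / N
  obtain ⟨v, huv, hvv₁⟩ := hconn.exists_dist_eq_of_le_dist (x := u) (y := v₁) hks
  set D := (rips Γ N).dist u b
  have hub := (hconn.rips_dist_le_iff hN).mp (le_refl D)
  have hkD : k ≤ D := Nat.le_of_mul_le_mul_right (by omega : k * N ≤ D * N) (by omega)
  have hvb : Γ.dist v b ≤ Γ.dist v v₁ + Γ.dist v₁ b := hconn.dist_triangle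
  have huv' : (rips Γ N).dist u v ≤ k := (hconn.rips_dist_le_iff hN).mpr huv.le
  have hvb' : (rips Γ N).dist v b ≤ D - k :=
    (hconn.rips_dist_le_iff hN).mpr (by rw [Nat.sub_mul]; omega)
  have htri : D ≤ (rips Γ N).dist u v + (rips Γ N).dist v b :=
    (connected_rips hconn hN).dist_triangle
  refine ⟨v, mem_geodesicInterval.mpr (by omega), ?_⟩
  rw [dist_comm]
  omega

end Connected

end SimpleGraph

theorem stmt5_general {V : Type*} (Γ : SimpleGraph V) (hconn : Γ.Connected)
    (β : ℕ) (hstable : HasStableIntervals Γ β)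
    (N : ℕ) (hN : 1 ≤ N) :
    HasStableIntervals (rips Γ N) (3 * β + 1) := by
  rw [(connected_rips hconn hN).hasStableIntervals_iff]
  intro a b w u hw hu
  have hua : Γ.dist u a ≤ N := by simpa using (hconn.rips_dist_le_iff hN).mp hu.le
  have hdefect := hconn.dist_add_dist_lt_of_mem_rips_geodesicInterval hN hw
  obtain ⟨v₀, hv₀, hwv₀⟩ := hstable.exists_dist_le_mul_of_dist_add_dist_le hconn
    (a := a) (b := b) (w := w) (δ := N - 1) (by omega)
  obtain ⟨v₁, hv₁, hv₀v₁⟩ := hstable.exists_dist_le_mul_dist_start hconn hv₀ u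
  obtain ⟨v, hv, hv₁v⟩ := hconn.exists_mem_rips_geodesicInterval_dist_lt hN hv₁
  refine ⟨v, hv, (hconn.rips_dist_le_iff hN).mpr ?_⟩
  have hwv : Γ.dist w v ≤ Γ.dist w v₀ + Γ.dist v₀ v := hconn.dist_triangle
  have hv₀v : Γ.dist v₀ v ≤ Γ.dist v₀ v₁ + Γ.dist v₁ v := hconn.dist_triangle
  have hδ : β * (N - 1) ≤ β * N := Nat.mul_le_mul_left β (Nat.sub_le N 1)
  have hk : β * Γ.dist u a ≤ β * N := Nat.mul_le_mul_left β hua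
  have hβN : (3 * β + 1) * N = 3 * (β * N) + N := by ring
  omega

theorem stmt5 {V : Type*} (Γ : SimpleGraph V) (hconn : Γ.Connected)
    (β : ℕ) (hβ : 1 ≤ β) (hstable : HasStableIntervals Γ β)
    (N : ℕ) (hN : 1 ≤ N) :
    HasStableIntervals (rips Γ N) (3 * β + 1) :=
  stmt5_general Γ hconn β hstable N hN
end

section
/- A connected graph Γ is pseudo-modular if and only if every triple of pairwise intersecting balls B_{ρ_1}(x_1), B_{ρ_2}(x_2), B_{ρ_3}(x_3) in Γ has nonempty total intersection. -/
open SimpleGraph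

/-- A connected graph is pseudo-modular if every triple of vertices `w₁, w₂, w₃` admits
"median-like" vertices `m₁, m₂, m₃` with equal pairwise distances at most `1`, such that
for each `i` the concatenation of a geodesic from `wᵢ` to `mᵢ`, a path of length
`d(mᵢ, mᵢ₊₁)` and a reversed geodesic from `wᵢ₊₁` to `mᵢ₊₁` is a geodesic from `wᵢ` to
`wᵢ₊₁` (expressed below via the corresponding length equalities). -/
def PseudoModular {V : Type*} (G : SimpleGraph V) : Prop :=
  ∀ w₁ w₂ w₃ : V, ∃ m₁ m₂ m₃ : V,
    G.dist m₁ m₂ ≤ 1 ∧ G.dist m₁ m₂ = G.dist m₂ m₃ ∧ G.dist m₂ m₃ = G.dist m₃ m₁ ∧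
    G.dist w₁ m₁ + G.dist m₁ m₂ + G.dist m₂ w₂ = G.dist w₁ w₂ ∧
    G.dist w₂ m₂ + G.dist m₂ m₃ + G.dist m₃ w₃ = G.dist w₂ w₃ ∧
    G.dist w₃ m₃ + G.dist m₃ m₁ + G.dist m₁ w₁ = G.dist w₃ w₁

/-!
Both directions go through quasi-medians. Given a quasi-median `m₁ m₂ m₃` of `x₁ x₂ x₃` with
side `t ≤ 1`, pairwise intersecting balls satisfy `d(xᵢ, mᵢ) + t + d(mⱼ, xⱼ) ≤ ρᵢ + ρⱼ`; walking
from the centre `xᵢ` maximising `d(xᵢ, mᵢ) - ρᵢ` towards `mᵢ` for `min(d(xᵢ, mᵢ), ρᵢ)` steps reaches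
a point of all three balls.

Conversely, pushing each `mᵢ` as far as possible from `wᵢ` inside the intersection of two
intervals produces a quasi-median `m₁ m₂ m₃` which is a metric triangle. In a metric triangle
`u v w` the balls `B₁(u)`, `B_{d(u,v)-1}(v)`, `B_{d(u,w)-1}(w)` have no common point, so if the
Helly property holds they cannot intersect pairwise, i.e. `d(u,v) + d(u,w) ≤ d(v,w) + 1`. The
three such inequalities force the triangle to be equilateral of side at most `1`.
-/

namespace SimpleGraph

variable {V : Type*} {G : SimpleGraph V}

def HellyTriples (G : SimpleGraph V) : Prop :=
  ∀ (x₁ x₂ x₃ : V) (ρ₁ ρ₂ ρ₃ : ℕ),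
    (gball G x₁ ρ₁ ∩ gball G x₂ ρ₂).Nonempty →
    (gball G x₂ ρ₂ ∩ gball G x₃ ρ₃).Nonempty →
    (gball G x₁ ρ₁ ∩ gball G x₃ ρ₃).Nonempty →
    (gball G x₁ ρ₁ ∩ gball G x₂ ρ₂ ∩ gball G x₃ ρ₃).Nonempty

def interval (G : SimpleGraph V) (u v : V) : Set V :=
  {x | G.dist u x + G.dist x v = G.dist u v}

def IsMetricTriangle (G : SimpleGraph V) (u v w : V) : Prop :=
  G.interval u v ∩ G.interval u w ⊆ {u} ∧ G.interval v u ∩ G.interval v w ⊆ {v} ∧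
    G.interval w u ∩ G.interval w v ⊆ {w}

lemma Connected.exists_dist_eq_of_le (hconn : G.Connected) {u v : V} {k : ℕ}
    (hk : k ≤ G.dist u v) : ∃ p, G.dist u p = k ∧ G.dist p v = G.dist u v - k := by
  obtain ⟨w, hw⟩ := hconn.exists_walk_length_eq_dist u v
  have hup : G.dist u (w.getVert k) ≤ k :=
    (dist_le (w.take k)).trans (w.take_length k ▸ inf_le_left)
  have hpv : G.dist (w.getVert k) v ≤ G.dist u v - k := hw ▸ w.drop_length k ▸ dist_le (w.drop k)
  have htri := hconn.dist_triangle (u := u) (v := w.getVert k) (w := v)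
  exact ⟨w.getVert k, by omega, by omega⟩

lemma Connected.gball_inter_nonempty_iff (hconn : G.Connected) {x y : V} {r s : ℕ} :
    (gball G x r ∩ gball G y s).Nonempty ↔ G.dist x y ≤ r + s := by
  constructor
  · rintro ⟨p, hpx, hpy⟩
    calc G.dist x y ≤ G.dist x p + G.dist p y := hconn.dist_triangle
      _ = G.dist p x + G.dist p y := by rw [dist_comm]
      _ ≤ r + s := add_le_add hpx hpy
  · intro h
    obtain ⟨p, hxp, hpy⟩ := hconn.exists_dist_eq_of_le (min_le_right r (G.dist x y))
    refine ⟨p, ?_, ?_⟩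
    · show G.dist p x ≤ r
      rw [dist_comm]
      omega
    · show G.dist p y ≤ s
      omega

lemma Connected.hellyTriples_iff (hconn : G.Connected) :
    G.HellyTriples ↔ ∀ (x₁ x₂ x₃ : V) (ρ₁ ρ₂ ρ₃ : ℕ),
      G.dist x₁ x₂ ≤ ρ₁ + ρ₂ → G.dist x₂ x₃ ≤ ρ₂ + ρ₃ → G.dist x₁ x₃ ≤ ρ₁ + ρ₃ →
      ∃ p, G.dist p x₁ ≤ ρ₁ ∧ G.dist p x₂ ≤ ρ₂ ∧ G.dist p x₃ ≤ ρ₃ := by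
  simp only [HellyTriples, hconn.gball_inter_nonempty_iff]
  simp only [Set.Nonempty, Set.mem_inter_iff, and_assoc]
  rfl

lemma mem_interval {u v x : V} :
    x ∈ G.interval u v ↔ G.dist u x + G.dist x v = G.dist u v :=
  Iff.rfl

lemma Connected.dist_triangle₃ (hconn : G.Connected) {u v w x : V} :
    G.dist u x ≤ G.dist u v + G.dist v w + G.dist w x :=
  hconn.dist_triangle.trans (Nat.add_le_add_right hconn.dist_triangle _)

lemma Connected.mem_interval_of_le (hconn : G.Connected) {u v x : V}
    (h : G.dist u x + G.dist x v ≤ G.dist u v) : x ∈ G.interval u v :=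
  le_antisymm h hconn.dist_triangle

lemma exists_farthest_mem_interval_inter (G : SimpleGraph V) (w a b : V) :
    ∃ m ∈ G.interval w a ∩ G.interval w b,
      ∀ x ∈ G.interval w a ∩ G.interval w b, G.dist w x ≤ G.dist w m := by
  set S := G.interval w a ∩ G.interval w b
  have hw : w ∈ S := by simp [S, interval]
  have hbdd : BddAbove (G.dist w '' S) :=
    ⟨G.dist w a, by rintro _ ⟨x, hx, rfl⟩; exact Nat.le.intro hx.1⟩
  obtain ⟨m, hm, hmax⟩ := Nat.sSup_mem ⟨_, Set.mem_image_of_mem _ hw⟩ hbdd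
  exact ⟨m, hm, fun x hx => hmax ▸ le_csSup hbdd (Set.mem_image_of_mem _ hx)⟩

lemma Connected.interval_inter_subset_of_farthest (hconn : G.Connected) {w a b m a' b' : V}
    (hmax : ∀ x ∈ G.interval w a ∩ G.interval w b, G.dist w x ≤ G.dist w m)
    (ha : G.dist w m + G.dist m a' + G.dist a' a = G.dist w a)
    (hb : G.dist w m + G.dist m b' + G.dist b' b = G.dist w b) :
    G.interval m a' ∩ G.interval m b' ⊆ {m} := by
  rintro x ⟨hxa, hxb⟩
  rw [mem_interval] at hxa hxb
  have hwx := hconn.dist_triangle (u := w) (v := m) (w := x)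
  have hxa' := hconn.dist_triangle (u := x) (v := a') (w := a)
  have hxb' := hconn.dist_triangle (u := x) (v := b') (w := b)
  have hx := hmax x ⟨hconn.mem_interval_of_le (by omega), hconn.mem_interval_of_le (by omega)⟩
  have hwa := hconn.dist_triangle (u := w) (v := x) (w := a)
  exact (hconn.dist_eq_zero_iff.mp (by omega)).symm

lemma Connected.dist_add_dist_le_of_interval_inter_subset (hconn : G.Connected)
    (hH : G.HellyTriples) {u v w : V} (hu : G.interval u v ∩ G.interval u w ⊆ {u})
    (hv : 1 ≤ G.dist u v) (hw : 1 ≤ G.dist u w) :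
    G.dist u v + G.dist u w ≤ G.dist v w + 1 := by
  by_contra! hlt
  obtain ⟨p, hpu, hpv, hpw⟩ := (hconn.hellyTriples_iff.mp hH) u v w 1 (G.dist u v - 1)
    (G.dist u w - 1) (by omega) (by omega) (by omega)
  rw [dist_comm] at hpu
  have hpuv := hconn.mem_interval_of_le (u := u) (v := v) (x := p) (by omega)
  have hpuw := hconn.mem_interval_of_le (u := u) (v := w) (x := p) (by omega)
  obtain rfl : p = u := hu ⟨hpuv, hpuw⟩
  omega

lemma IsMetricTriangle.dist_le_one_and_eq (hconn : G.Connected) (hH : G.HellyTriples)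
    {u v w : V} (h : G.IsMetricTriangle u v w) :
    G.dist u v ≤ 1 ∧ G.dist u v = G.dist v w ∧ G.dist v w = G.dist w u := by
  have hu := hconn.dist_add_dist_le_of_interval_inter_subset hH h.1
  have hv := hconn.dist_add_dist_le_of_interval_inter_subset hH h.2.1
  have hw := hconn.dist_add_dist_le_of_interval_inter_subset hH h.2.2
  have t₁ := hconn.dist_triangle (u := u) (v := v) (w := w)
  have t₂ := hconn.dist_triangle (u := v) (v := w) (w := u)
  have t₃ := hconn.dist_triangle (u := w) (v := u) (w := v)
  simp only [dist_comm (u := v) (v := u), dist_comm (u := w) (v := v),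
    dist_comm (u := u) (v := w)] at *
  omega

/-- The centre `x₁` maximises `d(xᵢ, mᵢ) - ρᵢ`; the common point lies on a geodesic from `x₁`
to `m₁`. -/
lemma Connected.exists_dist_le_of_corner (hconn : G.Connected) {x₁ x₂ x₃ m₁ m₂ m₃ : V}
    {ρ₁ ρ₂ ρ₃ t : ℕ} (ht : t ≤ 1) (hm₂ : G.dist m₁ m₂ ≤ t) (hm₃ : G.dist m₁ m₃ ≤ t)
    (hρ₂ : G.dist x₁ m₁ + t + G.dist x₂ m₂ ≤ ρ₁ + ρ₂)
    (hρ₃ : G.dist x₁ m₁ + t + G.dist x₃ m₃ ≤ ρ₁ + ρ₃)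
    (hmax₂ : G.dist x₂ m₂ + ρ₁ ≤ G.dist x₁ m₁ + ρ₂)
    (hmax₃ : G.dist x₃ m₃ + ρ₁ ≤ G.dist x₁ m₁ + ρ₃) :
    ∃ p, G.dist p x₁ ≤ ρ₁ ∧ G.dist p x₂ ≤ ρ₂ ∧ G.dist p x₃ ≤ ρ₃ := by
  obtain ⟨p, hx₁p, hpm₁⟩ := hconn.exists_dist_eq_of_le (min_le_left (G.dist x₁ m₁) ρ₁)
  have hpx₂ := hconn.dist_triangle₃ (u := p) (v := m₁) (w := m₂) (x := x₂)
  have hpx₃ := hconn.dist_triangle₃ (u := p) (v := m₁) (w := m₃) (x := x₃)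
  rw [dist_comm (u := x₁)] at hx₁p
  rw [dist_comm (u := m₂)] at hpx₂
  rw [dist_comm (u := m₃)] at hpx₃
  exact ⟨p, by omega, by omega, by omega⟩

theorem PseudoModular.hellyTriples (hpm : PseudoModular G) (hconn : G.Connected) :
    G.HellyTriples := by
  rw [hconn.hellyTriples_iff]
  intro x₁ x₂ x₃ ρ₁ ρ₂ ρ₃ h₁₂ h₂₃ h₁₃
  obtain ⟨m₁, m₂, m₃, ht, h₁₂₃, h₂₃₁, e₁, e₂, e₃⟩ := hpm x₁ x₂ x₃
  rw [dist_comm (u := m₁) (v := x₁), dist_comm (u := m₂) (v := x₂), dist_comm (u := m₃) (v := x₃),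
    dist_comm (u := x₃) (v := x₁)] at *
  have hm₂₁ : G.dist m₂ m₁ = G.dist m₁ m₂ := dist_comm
  have hm₁₃ : G.dist m₁ m₃ = G.dist m₃ m₁ := dist_comm
  have hm₃₂ : G.dist m₃ m₂ = G.dist m₂ m₃ := dist_comm
  rcases (by omega : (G.dist x₂ m₂ + ρ₁ ≤ G.dist x₁ m₁ + ρ₂ ∧ G.dist x₃ m₃ + ρ₁ ≤ G.dist x₁ m₁ + ρ₃) ∨
      (G.dist x₁ m₁ + ρ₂ ≤ G.dist x₂ m₂ + ρ₁ ∧ G.dist x₃ m₃ + ρ₂ ≤ G.dist x₂ m₂ + ρ₃) ∨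
      (G.dist x₁ m₁ + ρ₃ ≤ G.dist x₃ m₃ + ρ₁ ∧ G.dist x₂ m₂ + ρ₃ ≤ G.dist x₃ m₃ + ρ₂))
    with ⟨h₂, h₃⟩ | ⟨h₁, h₃⟩ | ⟨h₁, h₂⟩
  · exact hconn.exists_dist_le_of_corner ht le_rfl (by omega) (by omega) (by omega) h₂ h₃
  · obtain ⟨p, hp₂, hp₁, hp₃⟩ := hconn.exists_dist_le_of_corner (x₁ := x₂) (m₁ := m₂) ht
      (by omega) (by omega) (by omega) (by omega) h₁ h₃
    exact ⟨p, hp₁, hp₂, hp₃⟩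
  · obtain ⟨p, hp₃, hp₁, hp₂⟩ := hconn.exists_dist_le_of_corner (x₁ := x₃) (m₁ := m₃) ht
      (by omega) (by omega) (by omega) (by omega) h₁ h₂
    exact ⟨p, hp₁, hp₂, hp₃⟩

theorem Connected.pseudoModular_of_hellyTriples (hconn : G.Connected) (hH : G.HellyTriples) :
    PseudoModular G := by
  intro w₁ w₂ w₃
  obtain ⟨m₁, ⟨h₁₂, h₁₃⟩, hmax₁⟩ := G.exists_farthest_mem_interval_inter w₁ w₂ w₃
  obtain ⟨m₂, ⟨h₂₁, h₂₃⟩, hmax₂⟩ := G.exists_farthest_mem_interval_inter w₂ m₁ w₃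
  obtain ⟨m₃, ⟨h₃₁, h₃₂⟩, hmax₃⟩ := G.exists_farthest_mem_interval_inter w₃ m₁ m₂
  rw [mem_interval] at h₁₂ h₁₃ h₂₁ h₂₃ h₃₁ h₃₂
  have hm₁m₂ : G.dist m₁ m₂ = G.dist m₂ m₁ := dist_comm
  have hm₁m₃ : G.dist m₁ m₃ = G.dist m₃ m₁ := dist_comm
  have hm₂m₃ : G.dist m₂ m₃ = G.dist m₃ m₂ := dist_comm
  have hw₁ : G.dist m₁ w₁ = G.dist w₁ m₁ := dist_comm
  have hw₂ : G.dist m₂ w₂ = G.dist w₂ m₂ := dist_comm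
  have hw₃ : G.dist m₃ w₃ = G.dist w₃ m₃ := dist_comm
  have hw₂m₁ : G.dist m₁ w₂ = G.dist w₂ m₁ := dist_comm
  have hw₃m₁ : G.dist m₁ w₃ = G.dist w₃ m₁ := dist_comm
  have hw₃m₂ : G.dist m₂ w₃ = G.dist w₃ m₂ := dist_comm
  have hw₁w₃ : G.dist w₃ w₁ = G.dist w₁ w₃ := dist_comm
  have e₁ : G.dist w₁ m₁ + G.dist m₁ m₂ + G.dist m₂ w₂ = G.dist w₁ w₂ := by omega
  have e₂ : G.dist w₂ m₂ + G.dist m₂ m₃ + G.dist m₃ w₃ = G.dist w₂ w₃ := by omega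
  have e₃ : G.dist w₃ m₃ + G.dist m₃ m₁ + G.dist m₁ w₁ = G.dist w₃ w₁ := by omega
  have htri : G.IsMetricTriangle m₁ m₂ m₃ :=
    ⟨hconn.interval_inter_subset_of_farthest hmax₁ e₁ (by omega),
      hconn.interval_inter_subset_of_farthest hmax₂ (by simp [h₂₁]) e₂,
      hconn.interval_inter_subset_of_farthest hmax₃ (by simp [h₃₁]) (by simp [h₃₂])⟩
  obtain ⟨hle, h₁₂₃, h₂₃₁⟩ := htri.dist_le_one_and_eq hconn hH
  exact ⟨m₁, m₂, m₃, hle, h₁₂₃, h₂₃₁, e₁, e₂, e₃⟩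

end SimpleGraph

theorem stmt10 {V : Type*} (Γ : SimpleGraph V) (hconn : Γ.Connected) :
    PseudoModular Γ ↔
      ∀ (x₁ x₂ x₃ : V) (ρ₁ ρ₂ ρ₃ : ℕ),
        (gball Γ x₁ ρ₁ ∩ gball Γ x₂ ρ₂).Nonempty →
        (gball Γ x₂ ρ₂ ∩ gball Γ x₃ ρ₃).Nonempty →
        (gball Γ x₁ ρ₁ ∩ gball Γ x₃ ρ₃).Nonempty →
        (gball Γ x₁ ρ₁ ∩ gball Γ x₂ ρ₂ ∩ gball Γ x₃ ρ₃).Nonempty := by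
  exact ⟨fun hpm => hpm.hellyTriples hconn, hconn.pseudoModular_of_hellyTriples⟩
end

section
/- Let Γ be a connected graph with β-stable intervals, let P be a geodesic in Γ, w a vertex on P, and let T, T' be paths with T_- = P_-, T'_- = P_+. Then there is a geodesic S from T_+ to T'_+ and a vertex v on S with d_Γ(w,v) ≤ β(|T| + |T'|). -/
/-! Each edge of `T` moves the initial point of the geodesic by one step, and stability of
intervals lets the tracked vertex move by at most `β` each time; the edges of `T'` are handled
the same way after reversing the geodesic. -/

open SimpleGraph

namespace SimpleGraph

variable {V : Type*} {G : SimpleGraph V}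

lemma Walk.reachable_of_mem_support {u v x : V} (p : G.Walk u v) (hx : x ∈ p.support) :
    G.Reachable x v := by
  classical
  exact (p.dropUntil x hx).reachable

lemma Walk.length_reverse_eq_dist {u v : V} {p : G.Walk u v} (hp : p.length = G.dist u v) :
    p.reverse.length = G.dist v u := by
  rw [Walk.length_reverse, hp, dist_comm]

namespace HasStableIntervals

variable {β : ℕ}

lemma exists_geodesic_from_end_of_walk (hG : HasStableIntervals G β) {a a' : V}
    (T : G.Walk a a') {b : V} (P : G.Walk a b) (hP : P.length = G.dist a b)
    (w : V) (hw : w ∈ P.support) :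
    ∃ S : G.Walk a' b, S.length = G.dist a' b ∧
      ∃ v ∈ S.support, G.dist w v ≤ β * T.length := by
  induction T generalizing w with
  | nil => exact ⟨P, hP, w, hw, by simp⟩
  | @cons a c a' hac T ih =>
    obtain ⟨Q, hQ, v, hv, hwv⟩ := hG P hP w hw c (dist_eq_one_iff_adj.mpr hac.symm)
    obtain ⟨S, hS, v', hv', hvv'⟩ := ih Q hQ v hv
    have hreach : G.Reachable v v' :=
      (Q.reachable_of_mem_support hv).trans (S.reachable_of_mem_support hv').symm
    refine ⟨S, hS, v', hv', ?_⟩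
    calc G.dist w v' ≤ G.dist w v + G.dist v v' := hreach.dist_triangle_right w
      _ ≤ β + β * T.length := Nat.add_le_add hwv hvv'
      _ = β * (Walk.cons hac T).length := by rw [Walk.length_cons]; ring

lemma exists_geodesic_to_end_of_walk (hG : HasStableIntervals G β) {b b' : V}
    (T' : G.Walk b b') {a : V} (P : G.Walk a b) (hP : P.length = G.dist a b)
    (w : V) (hw : w ∈ P.support) :
    ∃ S : G.Walk a b', S.length = G.dist a b' ∧
      ∃ v ∈ S.support, G.dist w v ≤ β * T'.length := by
  obtain ⟨S, hS, v, hv, hwv⟩ := hG.exists_geodesic_from_end_of_walk T' P.reverse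
    (Walk.length_reverse_eq_dist hP) w (by simpa using hw)
  exact ⟨S.reverse, Walk.length_reverse_eq_dist hS, v, by simpa using hv, hwv⟩

end HasStableIntervals

end SimpleGraph

theorem stmt17_general {V : Type*} (Γ : SimpleGraph V)
    (β : ℕ) (hstable : HasStableIntervals Γ β)
    {a b a' b' : V} (P : Γ.Walk a b) (hP : P.length = Γ.dist a b)
    (w : V) (hw : w ∈ P.support)
    (T : Γ.Walk a a') (T' : Γ.Walk b b') :
    ∃ S : Γ.Walk a' b', S.length = Γ.dist a' b' ∧
      ∃ v ∈ S.support, Γ.dist w v ≤ β * (T.length + T'.length) := by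
  obtain ⟨R, hR, u, hu, hwu⟩ := hstable.exists_geodesic_from_end_of_walk T P hP w hw
  obtain ⟨S, hS, v, hv, huv⟩ := hstable.exists_geodesic_to_end_of_walk T' R hR u hu
  have hreach : Γ.Reachable u v :=
    (R.reverse.reachable_of_mem_support (by simpa using hu)).trans
      (S.reverse.reachable_of_mem_support (by simpa using hv)).symm
  refine ⟨S, hS, v, hv, ?_⟩
  calc Γ.dist w v ≤ Γ.dist w u + Γ.dist u v := hreach.dist_triangle_right w
    _ ≤ β * T.length + β * T'.length := Nat.add_le_add hwu huv
    _ = β * (T.length + T'.length) := (Nat.mul_add ..).symm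

theorem stmt17 {V : Type*} (Γ : SimpleGraph V) (hconn : Γ.Connected)
    (β : ℕ) (hstable : HasStableIntervals Γ β)
    {a b a' b' : V} (P : Γ.Walk a b) (hP : P.length = Γ.dist a b)
    (w : V) (hw : w ∈ P.support)
    (T : Γ.Walk a a') (T' : Γ.Walk b b') :
    ∃ S : Γ.Walk a' b', S.length = Γ.dist a' b' ∧
      ∃ v ∈ S.support, Γ.dist w v ≤ β * (T.length + T'.length) :=
  stmt17_general Γ β hstable P hP w hw T T'
end
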